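/- Suppose that the Banach space X has a Schauder basis which is both subsymmetric and shrinking. Then X has property (𝔸). -/

import Mathlib

open scoped TensorProduct
open Filter Topology

noncomputable section

universe u

/-- A Schauder basis of `X`: vectors `e n` with coordinate functionals `coord n`,
biorthogonal, such that every `x` is the limit of its partial expansions. -/
structure CSchauderBasis (X : Type*) [NormedAddCommGroup X] [NormedSpace ℂ X] where
  e : ℕ → X
  coord : ℕ → X →L[ℂ] ℂ
  biorthogonal : ∀ i j, coord j (e i) = if i = j then 1 else 0
  expansion : ∀ x : X,
    Tendsto (fun N => ∑ n ∈ Finset.range N, coord n x • e n) atTop (nhds x)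

/-- A basis is shrinking if the adjoints of the basis projections converge strongly to
the identity of `X*` (equivalently, the coordinate functionals span a dense subspace
of `X*`). -/
def CSchauderBasis.Shrinking {X : Type*} [NormedAddCommGroup X] [NormedSpace ℂ X]
    (b : CSchauderBasis X) : Prop :=
  ∀ f : X →L[ℂ] ℂ,
    Tendsto (fun N => f.comp (∑ n ∈ Finset.range N, (b.coord n).smulRight (b.e n)))
      atTop (nhds f)

/-- A basis is unconditional if every expansion converges unconditionally. -/
def CSchauderBasis.Unconditional {X : Type*} [NormedAddCommGroup X] [NormedSpace ℂ X]
    (b : CSchauderBasis X) : Prop :=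
  ∀ x : X, HasSum (fun n => b.coord n x • b.e n) x

/-- The basis `(e n)` is equivalent to its subsequence `(e (φ n))`: the two bases have
uniformly comparable finite linear combinations. -/
def CSchauderBasis.EquivSubseq {X : Type*} [NormedAddCommGroup X] [NormedSpace ℂ X]
    (b : CSchauderBasis X) (φ : ℕ → ℕ) : Prop :=
  ∃ C > (0 : ℝ), ∀ (N : ℕ) (a : ℕ → ℂ),
    ‖∑ n ∈ Finset.range N, a n • b.e (φ n)‖ ≤ C * ‖∑ n ∈ Finset.range N, a n • b.e n‖ ∧
    ‖∑ n ∈ Finset.range N, a n • b.e n‖ ≤ C * ‖∑ n ∈ Finset.range N, a n • b.e (φ n)‖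

/-- A basis is subsymmetric if it is unconditional and equivalent to each of its
subsequences. -/
def CSchauderBasis.Subsymmetric {X : Type*} [NormedAddCommGroup X] [NormedSpace ℂ X]
    (b : CSchauderBasis X) : Prop :=
  b.Unconditional ∧ ∀ φ : ℕ → ℕ, StrictMono φ → b.EquivSubseq φ

/-- A Banach space `X` has property (𝔸) if there is a net of finite biorthogonal systems
`(x_{i,λ}, x*_{j,λ})`, with associated algebra homomorphisms
`E_λ : M_{n_λ}(ℂ) → 𝓕(X)`, `E_λ(a) = ∑ a i j • x_{i,λ} ⊗ x*_{j,λ}`, such that with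
`P_λ = E_λ(1)`: (i) `P_λ → 1_X` strongly; (ii) `P_λ^a → 1_{X*}` strongly; (iii) there
are irreducible finite matrix groups `𝒢_λ ≤ GL_{n_λ}(ℂ)` with
`sup {‖E_λ(g)‖ : g ∈ 𝒢_λ, λ} < ∞`. -/
def HasPropertyA (X : Type*) [NormedAddCommGroup X] [NormedSpace ℂ X] : Prop :=
  ∃ (Λ : Type) (_ : Nonempty Λ) (_ : Preorder Λ) (_ : IsDirected Λ (· ≤ ·))
    (n : Λ → ℕ) (x : (l : Λ) → Fin (n l) → X) (x' : (l : Λ) → Fin (n l) → (X →L[ℂ] ℂ)),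
    (∀ l i j, x' l j (x l i) = if i = j then 1 else 0) ∧
    (let E : (l : Λ) → Matrix (Fin (n l)) (Fin (n l)) ℂ → (X →L[ℂ] X) :=
        fun l a => ∑ i, ∑ j, a i j • (x' l j).smulRight (x l i)
     (∀ v : X, Tendsto (fun l => E l 1 v) atTop (nhds v)) ∧
     (∀ f : X →L[ℂ] ℂ, Tendsto (fun l => f.comp (E l 1)) atTop (nhds f)) ∧
     (∃ (G : (l : Λ) → Subgroup (GL (Fin (n l)) ℂ)) (C : ℝ),
        (∀ l, ((G l : Set (GL (Fin (n l)) ℂ))).Finite) ∧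
        (∀ l, Submodule.span ℂ ((fun g : GL (Fin (n l)) ℂ => (g : Matrix (Fin (n l)) (Fin (n l)) ℂ)) '' (G l)) = ⊤) ∧
        (∀ l, ∀ g ∈ G l, ‖E l (g : Matrix (Fin (n l)) (Fin (n l)) ℂ)‖ ≤ C)))


section PropAAux

open Finset

variable {X : Type*} [NormedAddCommGroup X] [NormedSpace ℂ X]

/-- A finitely supported "pattern" `c` of length `L` placed at position `s` along the basis. -/
def CSchauderBasis.pat (b : CSchauderBasis X) (c : ℕ → ℂ) (L s : ℕ) : X :=
  ∑ j ∈ Finset.range L, c j • b.e (s + j)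

/-- Extension of a pattern to a coefficient sequence supported on `[s, s+L)`. -/
def patExt (c : ℕ → ℂ) (s : ℕ) : ℕ → ℂ := fun n => if s ≤ n then c (n - s) else 0

lemma sum_patExt (b : CSchauderBasis X) (c : ℕ → ℂ) (L s : ℕ) (G : ℕ → ℕ) :
    ∑ n ∈ Finset.range (s + L), patExt c s n • b.e (G n)
      = ∑ j ∈ Finset.range L, c j • b.e (G (s + j)) := by
  rw [Finset.range_eq_Ico, ← Finset.sum_Ico_consecutive _ (Nat.zero_le s) (Nat.le_add_right s L)]
  have h1 : ∑ n ∈ Finset.Ico 0 s, patExt c s n • b.e (G n) = 0 := by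
    apply Finset.sum_eq_zero
    intro n hn
    simp only [Finset.mem_Ico] at hn
    have : ¬ s ≤ n := by omega
    simp [patExt, this]
  rw [h1, zero_add, Finset.sum_Ico_eq_sum_range]
  have h2 : s + L - s = L := by omega
  rw [h2]
  refine Finset.sum_congr rfl fun j hj => ?_
  have : s ≤ s + j := Nat.le_add_right s j
  simp [patExt, this]

lemma exists_transBound (b : CSchauderBasis X) (hsub : b.Subsymmetric) (m : ℕ) :
    ∃ C : ℝ, 1 ≤ C ∧ ∀ (c : ℕ → ℂ) (L s : ℕ),
      ‖b.pat c L (s + m)‖ ≤ C * ‖b.pat c L s‖ ∧ ‖b.pat c L s‖ ≤ C * ‖b.pat c L (s + m)‖ := by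
  obtain ⟨C, hCpos, hC⟩ := hsub.2 (fun n => n + m) (fun a b hab => Nat.add_lt_add_right hab m)
  refine ⟨max C 1, le_max_right _ _, fun c L s => ?_⟩
  obtain ⟨h1, h2⟩ := hC (s + L) (patExt c s)
  have e1 : ∑ n ∈ Finset.range (s + L), patExt c s n • b.e (n + m) = b.pat c L (s + m) := by
    rw [sum_patExt b c L s (fun n => n + m)]
    refine Finset.sum_congr rfl fun j hj => ?_
    have hidx : s + j + m = s + m + j := by omega
    show c j • b.e (s + j + m) = c j • b.e (s + m + j)
    rw [hidx]
  have e2 : ∑ n ∈ Finset.range (s + L), patExt c s n • b.e n = b.pat c L s :=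
    sum_patExt b c L s (fun n => n)
  rw [e1, e2] at h1 h2
  constructor
  · exact h1.trans (mul_le_mul_of_nonneg_right (le_max_left _ _) (norm_nonneg _))
  · exact h2.trans (mul_le_mul_of_nonneg_right (le_max_left _ _) (norm_nonneg _))

/-- Data recording a pattern `c` of length `L` compared at two positions `s`, `t`. -/
structure TransData where
  c : ℕ → ℂ
  L : ℕ
  s : ℕ
  t : ℕ

namespace TransData

def lo (p : TransData) : ℕ := min p.s p.t
def hi (p : TransData) : ℕ := max p.s p.t
def d (p : TransData) : ℕ := p.hi - p.lo

lemma lo_le_hi (p : TransData) : p.lo ≤ p.hi := min_le_max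

lemma hi_eq (p : TransData) : p.hi = p.lo + p.d := by
  have := p.lo_le_hi; unfold d; omega

lemma d_le_hi (p : TransData) : p.d ≤ p.hi := by
  unfold d; omega

end TransData

/-- Uniform boundedness of translated patterns. -/
lemma transUniform (b : CSchauderBasis X) (hsub : b.Subsymmetric) :
    ∃ C : ℝ, 1 ≤ C ∧ ∀ (c : ℕ → ℂ) (L s t : ℕ), ‖b.pat c L t‖ ≤ C * ‖b.pat c L s‖ := by
  classical
  choose Cm hCm1 hCm using exists_transBound b hsub
  have hCm0 : ∀ m, (0:ℝ) ≤ Cm m := fun m => le_trans zero_le_one (hCm1 m)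
  by_cases hU : ∃ F : ℕ, ∃ C : ℝ, 1 ≤ C ∧ ∀ (c : ℕ → ℂ) (L s t : ℕ),
      F ≤ s → F ≤ t → ‖b.pat c L t‖ ≤ C * ‖b.pat c L s‖
  · obtain ⟨F, C, hC1, hC⟩ := hU
    have hC0 : (0:ℝ) ≤ C := le_trans zero_le_one hC1
    refine ⟨Cm F * (C * Cm F), ?_, fun c L s t => ?_⟩
    · have hA : (1:ℝ)*1 ≤ C * Cm F := mul_le_mul hC1 (hCm1 F) zero_le_one hC0
      have hB : (1:ℝ)*1 ≤ Cm F * (C * Cm F) :=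
        mul_le_mul (hCm1 F) (by linarith) zero_le_one (hCm0 F)
      linarith
    · have h1 : ‖b.pat c L t‖ ≤ Cm F * ‖b.pat c L (t + F)‖ := (hCm F c L t).2
      have h2 : ‖b.pat c L (t + F)‖ ≤ C * ‖b.pat c L (s + F)‖ :=
        hC c L (s + F) (t + F) (by omega) (by omega)
      have h3 : ‖b.pat c L (s + F)‖ ≤ Cm F * ‖b.pat c L s‖ := (hCm F c L s).1
      calc ‖b.pat c L t‖ ≤ Cm F * ‖b.pat c L (t + F)‖ := h1
        _ ≤ Cm F * (C * ‖b.pat c L (s + F)‖) :=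
            mul_le_mul_of_nonneg_left h2 (hCm0 F)
        _ ≤ Cm F * (C * (Cm F * ‖b.pat c L s‖)) :=
            mul_le_mul_of_nonneg_left (mul_le_mul_of_nonneg_left h3 hC0) (hCm0 F)
        _ = Cm F * (C * Cm F) * ‖b.pat c L s‖ := by ring
  · exfalso
    push_neg at hU
    -- hU : ∀ F C, 1 ≤ C → ∃ c L s t, F ≤ s ∧ F ≤ t ∧ C * ‖pat s‖ < ‖pat t‖
    set R : TransData → ℝ :=
      fun p => ((p.d + 1 : ℕ) : ℝ) + ∑ m ∈ Finset.range (p.d + 1), Cm m with hR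
    have hR1 : ∀ p, 1 ≤ R p := by
      intro p
      have h1 : (1:ℝ) ≤ ((p.d + 1 : ℕ) : ℝ) := by exact_mod_cast Nat.succ_le_succ (Nat.zero_le _)
      have h2 : (0:ℝ) ≤ ∑ m ∈ Finset.range (p.d + 1), Cm m :=
        Finset.sum_nonneg fun m _ => hCm0 m
      simp only [hR]; linarith
    have hRd : ∀ p, ((p.d + 1 : ℕ) : ℝ) ≤ R p := by
      intro p
      have h2 : (0:ℝ) ≤ ∑ m ∈ Finset.range (p.d + 1), Cm m :=
        Finset.sum_nonneg fun m _ => hCm0 m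
      simp only [hR]; linarith
    have hRCm : ∀ p m, m ≤ p.d → Cm m ≤ R p := by
      intro p m hm
      have h1 : Cm m ≤ ∑ k ∈ Finset.range (p.d + 1), Cm k :=
        Finset.single_le_sum (fun k _ => hCm0 k) (Finset.mem_range.mpr (by omega))
      have h2 : (0:ℝ) ≤ ((p.d + 1 : ℕ) : ℝ) := Nat.cast_nonneg _
      simp only [hR]; linarith
    have pick : ∀ p : TransData, ∃ q : TransData,
        p.hi + p.L ≤ q.s ∧ p.hi + p.L ≤ q.t ∧
          R p * ‖b.pat q.c q.L q.s‖ < ‖b.pat q.c q.L q.t‖ := by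
      intro p
      obtain ⟨c, L, s, t, h1, h2, h3⟩ := hU (p.hi + p.L) (R p) (hR1 p)
      exact ⟨⟨c, L, s, t⟩, h1, h2, h3⟩
    set step : TransData → TransData := fun p => (pick p).choose with hstep
    have stepspec : ∀ p : TransData,
        p.hi + p.L ≤ (step p).s ∧ p.hi + p.L ≤ (step p).t ∧
          R p * ‖b.pat (step p).c (step p).L (step p).s‖
            < ‖b.pat (step p).c (step p).L (step p).t‖ := fun p => (pick p).choose_spec
    set seq : ℕ → TransData := fun i => step^[i] ⟨fun _ => 0, 0, 0, 0⟩ with hseq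
    have seq_succ : ∀ i, seq (i + 1) = step (seq i) := by
      intro i
      simp only [hseq]
      exact Function.iterate_succ_apply' step i _
    -- growth of the distance
    have hdgrow : ∀ i, (seq i).d + 1 ≤ (seq (i+1)).d := by
      intro i
      rw [seq_succ i]
      set p := seq i
      set q := step p
      by_contra hcon
      have hd : q.d ≤ p.d := by omega
      obtain ⟨hq1, hq2, hq3⟩ := stepspec p
      have key : ‖b.pat q.c q.L q.t‖ ≤ R p * ‖b.pat q.c q.L q.s‖ := by
        rcases Nat.le_total q.s q.t with hst | hst
        · have hts : q.t = q.s + q.d := by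
            have h1 : q.lo = q.s := min_eq_left hst
            have h2 : q.hi = q.t := max_eq_right hst
            have := q.hi_eq; omega
          have h1 : ‖b.pat q.c q.L (q.s + q.d)‖ ≤ Cm q.d * ‖b.pat q.c q.L q.s‖ :=
            (hCm q.d q.c q.L q.s).1
          rw [hts]
          exact h1.trans (mul_le_mul_of_nonneg_right (hRCm p q.d hd) (norm_nonneg _))
        · have hts : q.s = q.t + q.d := by
            have h1 : q.lo = q.t := min_eq_right hst
            have h2 : q.hi = q.s := max_eq_left hst
            have := q.hi_eq; omega
          have h1 : ‖b.pat q.c q.L q.t‖ ≤ Cm q.d * ‖b.pat q.c q.L (q.t + q.d)‖ :=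
            (hCm q.d q.c q.L q.t).2
          rw [hts]
          exact h1.trans (mul_le_mul_of_nonneg_right (hRCm p q.d hd) (norm_nonneg _))
      linarith
    have hdmono : Monotone (fun i => (seq i).d) :=
      monotone_nat_of_le_succ fun i => by have := hdgrow i; omega
    have hdge : ∀ i, i ≤ (seq i).d := by
      intro i
      induction i with
      | zero => omega
      | succ k ih => have := hdgrow k; omega
    -- positions move to the right
    have hlo_step : ∀ i, (seq i).hi + (seq i).L ≤ (seq (i+1)).lo := by
      intro i
      rw [seq_succ i]
      obtain ⟨h1, h2, _⟩ := stepspec (seq i)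
      exact le_min h1 h2
    have hlo_mono : Monotone (fun i => (seq i).lo) := by
      apply monotone_nat_of_le_succ
      intro i
      have h1 := hlo_step i
      have h2 := (seq i).lo_le_hi
      omega
    have hchain : ∀ i j, i < j → (seq i).lo + (seq i).L ≤ (seq j).lo := by
      intro i j hij
      have h1 := hlo_step i
      have h2 := (seq i).lo_le_hi
      have h3 := hlo_mono (show i + 1 ≤ j from hij)
      simp only at h3
      omega
    -- existence of blocks beyond any point
    have hex : ∀ q : ℕ, ∃ i, q < (seq i).lo + (seq i).L := by
      intro q
      refine ⟨q + 1 + 1, ?_⟩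
      have h1 : (seq (q+1)).d ≥ q + 1 := hdge (q+1)
      have h2 := hlo_step (q + 1)
      have h3 := (seq (q+1)).d_le_hi
      omega
    set I : ℕ → ℕ := fun q => Nat.find (hex q) with hI
    set ψ : ℕ → ℕ := fun q => q + (seq (I q)).d with hψdef
    have hImono : ∀ q, I q ≤ I (q + 1) := by
      intro q
      have hspec : q + 1 < (seq (I (q+1))).lo + (seq (I (q+1))).L := Nat.find_spec (hex (q + 1))
      exact Nat.find_min' (hex q) (by omega)
    have hψmono : StrictMono ψ := by
      apply strictMono_nat_of_lt_succ
      intro q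
      have h1 := hdmono (hImono q)
      simp only at h1
      simp only [hψdef]
      omega
    -- value of ψ on the i-th block
    have hblock : ∀ i, ∀ j, j < (seq i).L → ψ ((seq i).lo + j) = (seq i).hi + j := by
      intro i j hj
      have hIval : I ((seq i).lo + j) = i := by
        apply le_antisymm
        · exact Nat.find_min' _ (by omega)
        · by_contra hcon
          push_neg at hcon
          have h1 : (seq i).lo + j < (seq (I ((seq i).lo + j))).lo + (seq (I ((seq i).lo + j))).L :=
            Nat.find_spec (hex ((seq i).lo + j))
          have h2 := hchain _ _ hcon
          omega
      simp only [hψdef, hIval]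
      have := (seq i).hi_eq
      omega
    obtain ⟨Cψ, hCψpos, hCψ⟩ := hsub.2 ψ hψmono
    -- each round forces Cψ to be large
    have hround : ∀ i : ℕ, ((i:ℝ) + 1) ≤ Cψ := by
      intro i
      set p := seq i
      set q := seq (i + 1) with hq
      have hqs : q = step p := seq_succ i
      obtain ⟨hq1, hq2, hq3⟩ := stepspec p
      rw [← hqs] at hq1 hq2 hq3
      obtain ⟨hc1, hc2⟩ := hCψ (q.lo + q.L) (patExt q.c q.lo)
      have e1 : ∑ n ∈ Finset.range (q.lo + q.L), patExt q.c q.lo n • b.e n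
          = b.pat q.c q.L q.lo := sum_patExt b q.c q.L q.lo (fun n => n)
      have e2 : ∑ n ∈ Finset.range (q.lo + q.L), patExt q.c q.lo n • b.e (ψ n)
          = b.pat q.c q.L q.hi := by
        rw [sum_patExt b q.c q.L q.lo ψ]
        refine Finset.sum_congr rfl fun j hj => ?_
        rw [hblock (i+1) j (Finset.mem_range.mp hj)]
      rw [e1, e2] at hc1 hc2
      -- relate to s and t
      have hmain : ‖b.pat q.c q.L q.t‖ ≤ Cψ * ‖b.pat q.c q.L q.s‖ := by
        rcases Nat.le_total q.s q.t with hst | hst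
        · have h1 : q.lo = q.s := min_eq_left hst
          have h2 : q.hi = q.t := max_eq_right hst
          rw [h1, h2] at hc1
          exact hc1
        · have h1 : q.lo = q.t := min_eq_right hst
          have h2 : q.hi = q.s := max_eq_left hst
          rw [h1, h2] at hc2
          exact hc2
      have hRp : ((i:ℝ) + 1) ≤ R p := by
        have h1 := hRd p
        have h2 : ((i:ℝ)+1) ≤ ((p.d + 1 : ℕ) : ℝ) := by
          have := hdge i
          push_cast
          have : (i:ℝ) ≤ (p.d : ℝ) := by exact_mod_cast hdge i
          linarith
        linarith
      -- conclude
      rcases eq_or_lt_of_le (norm_nonneg (b.pat q.c q.L q.s)) with hz | hz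
      · exfalso
        rw [← hz] at hmain hq3
        simp only [mul_zero] at hmain hq3
        linarith
      · have hmm : R p * ‖b.pat q.c q.L q.s‖ < Cψ * ‖b.pat q.c q.L q.s‖ :=
          lt_of_lt_of_le hq3 hmain
        have hlt : R p < Cψ := lt_of_mul_lt_mul_right hmm (norm_nonneg _)
        linarith
    obtain ⟨nn, hnn⟩ := exists_nat_gt Cψ
    have := hround nn
    linarith

/-- Uniform bound on signed coordinate-multiplier sums, via Banach–Steinhaus. -/
lemma exists_signBound (b : CSchauderBasis X) [CompleteSpace X] (hunc : b.Unconditional) :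
    ∃ K : ℝ, 1 ≤ K ∧ ∀ (A : Finset ℕ) (ε : ℕ → ℂ), (∀ j ∈ A, ε j = 1 ∨ ε j = -1) →
      ∀ x : X, ‖∑ j ∈ A, ε j • (b.coord j x • b.e j)‖ ≤ K * ‖x‖ := by
  classical
  set T : Finset ℕ × (ℕ → ℂ) → X →L[ℂ] X := fun p =>
    if (∀ j ∈ p.1, p.2 j = 1 ∨ p.2 j = -1) then
      ∑ j ∈ p.1, p.2 j • (b.coord j).smulRight (b.e j) else 0 with hT
  have happ : ∀ (A : Finset ℕ) (ε : ℕ → ℂ) (x : X),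
      (∑ j ∈ A, ε j • (b.coord j).smulRight (b.e j)) x
        = ∑ j ∈ A, ε j • (b.coord j x • b.e j) := by
    intro A ε x
    rw [ContinuousLinearMap.sum_apply]
    refine Finset.sum_congr rfl fun j hj => ?_
    rw [ContinuousLinearMap.smul_apply, ContinuousLinearMap.smulRight_apply]
  have hpt : ∀ x : X, ∃ C, ∀ p, ‖T p x‖ ≤ C := by
    intro x
    obtain ⟨s₀, hs₀⟩ : ∃ s₀ : Finset ℕ, ∀ s : Finset ℕ, s₀ ⊆ s →
        ‖(∑ j ∈ s, b.coord j x • b.e j) - x‖ ≤ 1 := by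
      have h := hunc x
      have h2 := Metric.tendsto_nhds.mp h 1 one_pos
      rw [show (SummationFilter.unconditional ℕ).filter = atTop from rfl, Filter.eventually_atTop] at h2
      obtain ⟨s₀, h3⟩ := h2
      refine ⟨s₀, fun s hs => ?_⟩
      have := h3 s hs
      rw [dist_eq_norm] at this
      linarith
    set M : ℝ := ‖x‖ + 1 + ∑ j ∈ s₀, ‖b.coord j x • b.e j‖ with hM
    have hM0 : 0 ≤ M := by
      have : (0:ℝ) ≤ ∑ j ∈ s₀, ‖b.coord j x • b.e j‖ :=
        Finset.sum_nonneg fun j _ => norm_nonneg _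
      have := norm_nonneg x
      simp only [hM]; linarith
    have hsubset : ∀ B : Finset ℕ, ‖∑ j ∈ B, b.coord j x • b.e j‖ ≤ M := by
      intro B
      have hsplit : ∑ j ∈ B, b.coord j x • b.e j
          = (∑ j ∈ B ∪ s₀, b.coord j x • b.e j) - ∑ j ∈ s₀ \ B, b.coord j x • b.e j := by
        have h0 : ∑ j ∈ B ∪ s₀, b.coord j x • b.e j
            = (∑ j ∈ B, b.coord j x • b.e j) + ∑ j ∈ s₀ \ B, b.coord j x • b.e j := by
          rw [← Finset.union_sdiff_self_eq_union, Finset.sum_union Finset.disjoint_sdiff]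
        rw [h0]
        abel
      rw [hsplit]
      have h1 : ‖∑ j ∈ B ∪ s₀, b.coord j x • b.e j‖ ≤ ‖x‖ + 1 := by
        have := hs₀ (B ∪ s₀) Finset.subset_union_right
        have h2 := norm_sub_norm_le (∑ j ∈ B ∪ s₀, b.coord j x • b.e j) x
        linarith
      have h2 : ‖∑ j ∈ s₀ \ B, b.coord j x • b.e j‖ ≤ ∑ j ∈ s₀, ‖b.coord j x • b.e j‖ := by
        refine (norm_sum_le _ _).trans ?_
        exact Finset.sum_le_sum_of_subset_of_nonneg (Finset.sdiff_subset)
          (fun j _ _ => norm_nonneg _)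
      calc ‖_ - _‖ ≤ ‖∑ j ∈ B ∪ s₀, b.coord j x • b.e j‖ + ‖∑ j ∈ s₀ \ B, b.coord j x • b.e j‖ :=
            norm_sub_le _ _
        _ ≤ M := by simp only [hM]; linarith
    refine ⟨2 * M, fun p => ?_⟩
    by_cases hp : ∀ j ∈ p.1, p.2 j = 1 ∨ p.2 j = -1
    · have hTp : T p = ∑ j ∈ p.1, p.2 j • (b.coord j).smulRight (b.e j) := by
        simp only [hT, if_pos hp]
      rw [hTp, happ]
      have e1 : ∑ j ∈ p.1.filter (fun j => p.2 j = 1), p.2 j • (b.coord j x • b.e j)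
          = ∑ j ∈ p.1.filter (fun j => p.2 j = 1), b.coord j x • b.e j :=
        Finset.sum_congr rfl fun j hj => by
          rw [(Finset.mem_filter.mp hj).2, one_smul]
      have e2 : ∑ j ∈ p.1.filter (fun j => ¬ p.2 j = 1), p.2 j • (b.coord j x • b.e j)
          = - ∑ j ∈ p.1.filter (fun j => ¬ p.2 j = 1), b.coord j x • b.e j := by
        rw [← Finset.sum_neg_distrib]
        refine Finset.sum_congr rfl fun j hj => ?_
        have hj' := Finset.mem_filter.mp hj
        have hval : p.2 j = -1 := by
          rcases hp j hj'.1 with h | h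
          · exact absurd h hj'.2
          · exact h
        rw [hval, neg_one_smul]
      have hsp := Finset.sum_filter_add_sum_filter_not p.1 (fun j => p.2 j = 1)
        (fun j => p.2 j • (b.coord j x • b.e j))
      calc ‖∑ j ∈ p.1, p.2 j • (b.coord j x • b.e j)‖
          = ‖(∑ j ∈ p.1.filter (fun j => p.2 j = 1), b.coord j x • b.e j)
              + -∑ j ∈ p.1.filter (fun j => ¬ p.2 j = 1), b.coord j x • b.e j‖ := by
            rw [← e1, ← e2, hsp]
        _ ≤ ‖∑ j ∈ p.1.filter (fun j => p.2 j = 1), b.coord j x • b.e j‖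
              + ‖∑ j ∈ p.1.filter (fun j => ¬ p.2 j = 1), b.coord j x • b.e j‖ := by
            refine (norm_add_le _ _).trans ?_
            rw [norm_neg]
        _ ≤ 2 * M := by
            have := hsubset (p.1.filter (fun j => p.2 j = 1))
            have := hsubset (p.1.filter (fun j => ¬ p.2 j = 1))
            linarith
    · have hTp : T p = 0 := by simp only [hT, if_neg hp]
      rw [hTp]
      simp only [ContinuousLinearMap.zero_apply, norm_zero]
      linarith
  obtain ⟨C', hC'⟩ := banach_steinhaus hpt
  refine ⟨max C' 1, le_max_right _ _, fun A ε hε x => ?_⟩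
  have hTAε : T (A, ε) = ∑ j ∈ A, ε j • (b.coord j).smulRight (b.e j) := by
    simp only [hT, if_pos hε]
  have h1 : ‖∑ j ∈ A, ε j • (b.coord j x • b.e j)‖ = ‖T (A, ε) x‖ := by
    rw [hTAε, happ]
  rw [h1]
  calc ‖T (A, ε) x‖ ≤ ‖T (A, ε)‖ * ‖x‖ := ContinuousLinearMap.le_opNorm _ _
    _ ≤ max C' 1 * ‖x‖ :=
        mul_le_mul_of_nonneg_right ((hC' (A, ε)).trans (le_max_left _ _)) (norm_nonneg _)

/-! ### Signed cyclic permutation matrices -/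

/-- The permutation matrix of `σ`. -/
def permMat {l : ℕ} (σ : Equiv.Perm (Fin l)) : Matrix (Fin l) (Fin l) ℂ :=
  Matrix.of fun i j => if i = σ j then 1 else 0

lemma permMat_apply {l : ℕ} (σ : Equiv.Perm (Fin l)) (i j : Fin l) :
    permMat σ i j = if i = σ j then 1 else 0 := rfl

lemma permMat_mul {l : ℕ} (σ τ : Equiv.Perm (Fin l)) :
    permMat σ * permMat τ = permMat (σ * τ) := by
  ext i j
  rw [Matrix.mul_apply]
  have hterm : ∀ k : Fin l, permMat σ i k * permMat τ k j
      = if k = τ j then (if i = σ k then (1:ℂ) else 0) else 0 := by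
    intro k
    rw [permMat_apply, permMat_apply]
    by_cases h : k = τ j <;> simp [h]
  rw [Finset.sum_congr rfl fun k _ => hterm k, Finset.sum_ite_eq' Finset.univ (τ j)]
  simp [permMat_apply, Equiv.Perm.mul_apply]
  exact if_congr Iff.rfl rfl rfl

lemma permMat_one {l : ℕ} : permMat (1 : Equiv.Perm (Fin l)) = 1 := by
  ext i j
  simp [permMat_apply, Matrix.one_apply]
  exact if_congr Iff.rfl rfl rfl

lemma permMat_mul_diagonal {l : ℕ} (σ : Equiv.Perm (Fin l)) (d : Fin l → ℂ) :
    permMat σ * Matrix.diagonal d = Matrix.diagonal (fun i => d (σ⁻¹ i)) * permMat σ := by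
  ext i j
  rw [Matrix.mul_diagonal, Matrix.diagonal_mul]
  simp only [permMat_apply]
  by_cases h : i = σ j
  · simp [h, Equiv.Perm.inv_def]
  · simp [h]

open Fin.NatCast Fin.CommRing in
lemma finRotate_pow_apply (m k : ℕ) :
    ∀ i : Fin (m+1), ((finRotate (m+1))^k) i = i + (k : Fin (m+1)) := by
  induction k with
  | zero => intro i; simp
  | succ k ih =>
    intro i
    rw [pow_succ, Equiv.Perm.mul_apply, finRotate_succ_apply, ih]
    push_cast
    ring

open Fin.NatCast in
lemma finRotate_pow_val (m k : ℕ) (i : Fin (m+1)) :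
    ((((finRotate (m+1))^k) i : Fin (m+1)) : ℕ) = ((i : ℕ) + k) % (m+1) := by
  rw [finRotate_pow_apply]
  simp [Fin.add_def, Fin.val_natCast, Nat.add_mod_mod]

open Fin.NatCast in
lemma finRotate_pow_self : ∀ l : ℕ, (finRotate l)^l = 1
  | 0 => by ext i; exact i.elim0
  | (m+1) => by
    ext i
    rw [finRotate_pow_apply, Fin.natCast_self, add_zero]
    simp

/-- The invertible matrix `diagonal d * permMat σ` for a sign pattern `d`. -/
def sgnUnit {l : ℕ} (d : Fin l → ℂ) (σ : Equiv.Perm (Fin l)) (hd : ∀ j, d j * d j = 1) :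
    GL (Fin l) ℂ where
  val := Matrix.diagonal d * permMat σ
  inv := permMat σ⁻¹ * Matrix.diagonal d
  val_inv := by
    have h1 : permMat σ * permMat σ⁻¹ = 1 := by
      rw [permMat_mul]
      have : σ * σ⁻¹ = 1 := by group
      rw [this, permMat_one]
    have hdd : Matrix.diagonal d * Matrix.diagonal d = 1 := by
      rw [Matrix.diagonal_mul_diagonal]
      have : (fun i => d i * d i) = fun _ => (1:ℂ) := funext fun i => hd i
      rw [this, Matrix.diagonal_one]
    calc Matrix.diagonal d * permMat σ * (permMat σ⁻¹ * Matrix.diagonal d)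
        = Matrix.diagonal d * (permMat σ * permMat σ⁻¹) * Matrix.diagonal d := by noncomm_ring
      _ = Matrix.diagonal d * Matrix.diagonal d := by rw [h1, mul_one]
      _ = 1 := hdd
  inv_val := by
    have h1 : permMat σ⁻¹ * permMat σ = 1 := by
      rw [permMat_mul]
      have : σ⁻¹ * σ = 1 := by group
      rw [this, permMat_one]
    have hdd : Matrix.diagonal d * Matrix.diagonal d = 1 := by
      rw [Matrix.diagonal_mul_diagonal]
      have : (fun i => d i * d i) = fun _ => (1:ℂ) := funext fun i => hd i
      rw [this, Matrix.diagonal_one]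
    calc permMat σ⁻¹ * Matrix.diagonal d * (Matrix.diagonal d * permMat σ)
        = permMat σ⁻¹ * (Matrix.diagonal d * Matrix.diagonal d) * permMat σ := by noncomm_ring
      _ = permMat σ⁻¹ * permMat σ := by rw [hdd, mul_one]
      _ = 1 := h1

lemma sgnUnit_coe {l : ℕ} (d : Fin l → ℂ) (σ : Equiv.Perm (Fin l)) (hd : ∀ j, d j * d j = 1) :
    (sgnUnit d σ hd : Matrix (Fin l) (Fin l) ℂ) = Matrix.diagonal d * permMat σ := rfl

/-- The group of signed cyclic permutation matrices. -/
def sgnGroup (l : ℕ) : Subgroup (GL (Fin l) ℂ) where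
  carrier := {g | ∃ (k : ℕ) (d : Fin l → ℂ), (∀ j, d j = 1 ∨ d j = -1) ∧
    (g : Matrix (Fin l) (Fin l) ℂ) = Matrix.diagonal d * permMat ((finRotate l)^k)}
  one_mem' := by
    refine ⟨0, fun _ => 1, fun j => Or.inl rfl, ?_⟩
    rw [pow_zero, permMat_one, Matrix.diagonal_one, one_mul, Units.val_one]
  mul_mem' := by
    rintro a c ⟨k, d, hd, ha⟩ ⟨k', d', hd', hc⟩
    refine ⟨k + k', fun i => d i * d' (((finRotate l)^k)⁻¹ i), fun j => ?_, ?_⟩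
    · show d j * d' (((finRotate l)^k)⁻¹ j) = 1 ∨ d j * d' (((finRotate l)^k)⁻¹ j) = -1
      rcases hd j with h | h <;> rcases hd' (((finRotate l)^k)⁻¹ j) with h' | h' <;>
        rw [h, h'] <;> norm_num
    · rw [Units.val_mul, ha, hc]
      calc Matrix.diagonal d * permMat ((finRotate l)^k)
            * (Matrix.diagonal d' * permMat ((finRotate l)^k'))
          = Matrix.diagonal d * (permMat ((finRotate l)^k) * Matrix.diagonal d')
            * permMat ((finRotate l)^k') := by noncomm_ring
        _ = Matrix.diagonal d
            * (Matrix.diagonal (fun i => d' (((finRotate l)^k)⁻¹ i)) * permMat ((finRotate l)^k))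
            * permMat ((finRotate l)^k') := by rw [permMat_mul_diagonal]
        _ = (Matrix.diagonal d * Matrix.diagonal (fun i => d' (((finRotate l)^k)⁻¹ i)))
            * (permMat ((finRotate l)^k) * permMat ((finRotate l)^k')) := by noncomm_ring
        _ = Matrix.diagonal (fun i => d i * d' (((finRotate l)^k)⁻¹ i))
            * permMat ((finRotate l)^(k + k')) := by
              rw [Matrix.diagonal_mul_diagonal, permMat_mul, ← pow_add]
  inv_mem' := by
    rintro a ⟨k, d, hd, ha⟩
    rcases Nat.eq_zero_or_pos l with hl | hl
    · subst hl
      refine ⟨0, fun _ => 1, fun j => Or.inl rfl, ?_⟩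
      ext i j
      exact i.elim0
    · set r := finRotate l with hr
      set k' := k * l - k with hk'
      have hkk' : k' + k = k * l := by
        have : k ≤ k * l := Nat.le_mul_of_pos_right k hl
        omega
      have hpow : (r^k') * (r^k) = 1 := by
        rw [← pow_add, hkk', pow_mul', finRotate_pow_self, one_pow]
      refine ⟨k', fun i => d ((r^k')⁻¹ i), fun j => hd _, ?_⟩
      have hB : (Matrix.diagonal (fun i => d ((r^k')⁻¹ i)) * permMat (r^k'))
          * (a : Matrix (Fin l) (Fin l) ℂ) = 1 := by
        rw [ha]
        calc Matrix.diagonal (fun i => d ((r^k')⁻¹ i)) * permMat (r^k')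
              * (Matrix.diagonal d * permMat (r^k))
            = Matrix.diagonal (fun i => d ((r^k')⁻¹ i))
              * (permMat (r^k') * Matrix.diagonal d) * permMat (r^k) := by noncomm_ring
          _ = (Matrix.diagonal (fun i => d ((r^k')⁻¹ i))
              * Matrix.diagonal (fun i => d ((r^k')⁻¹ i)))
              * (permMat (r^k') * permMat (r^k)) := by
                rw [permMat_mul_diagonal]
                noncomm_ring
          _ = 1 := by
                rw [Matrix.diagonal_mul_diagonal, permMat_mul, hpow, permMat_one, mul_one]
                have : (fun i => d ((r^k')⁻¹ i) * d ((r^k')⁻¹ i)) = fun _ => (1:ℂ) := by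
                  funext i
                  rcases hd ((r^k')⁻¹ i) with h | h <;> rw [h] <;> norm_num
                rw [this, Matrix.diagonal_one]
      calc ((a⁻¹ : GL (Fin l) ℂ) : Matrix (Fin l) (Fin l) ℂ)
          = 1 * ((a⁻¹ : GL (Fin l) ℂ) : Matrix (Fin l) (Fin l) ℂ) := by rw [one_mul]
        _ = (Matrix.diagonal (fun i => d ((r^k')⁻¹ i)) * permMat (r^k'))
            * ((a : Matrix (Fin l) (Fin l) ℂ)
              * ((a⁻¹ : GL (Fin l) ℂ) : Matrix (Fin l) (Fin l) ℂ)) := by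
            rw [← hB]; noncomm_ring
        _ = Matrix.diagonal (fun i => d ((r^k')⁻¹ i)) * permMat (r^k') := by
            rw [← Units.val_mul, mul_inv_cancel a, Units.val_one, mul_one]

lemma sgnGroup_finite (l : ℕ) : ((sgnGroup l : Set (GL (Fin l) ℂ))).Finite := by
  classical
  have hfin : ({(1:ℂ), -1} : Set ℂ).Finite := (Set.finite_singleton (-1)).insert 1
  haveI : Finite ({(1:ℂ), -1} : Set ℂ) := hfin.to_subtype
  have hrange : (Set.range (fun p : (Fin l → ({(1:ℂ), -1} : Set ℂ)) × Equiv.Perm (Fin l) =>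
      Matrix.diagonal (fun j => (p.1 j : ℂ)) * permMat p.2)).Finite := Set.finite_range _
  refine Set.Finite.subset (hrange.preimage
    (f := (Units.val : GL (Fin l) ℂ → Matrix (Fin l) (Fin l) ℂ))
    (fun x _ y _ h => Units.ext h)) ?_
  rintro g ⟨k, d, hd, hg⟩
  refine ⟨((fun j => ⟨d j, ?_⟩), (finRotate l)^k), ?_⟩
  · rcases hd j with h | h
    · rw [h]; exact Set.mem_insert _ _
    · rw [h]; exact Set.mem_insert_of_mem _ rfl
  · exact hg.symm

lemma finRotate_pow_val' (l : ℕ) (hl : 0 < l) (k : ℕ) (i : Fin l) :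
    ((((finRotate l)^k) i : Fin l) : ℕ) = ((i : ℕ) + k) % l := by
  rcases l with _ | m
  · omega
  · exact finRotate_pow_val m k i

lemma charSum {N : ℕ} (p i : Fin N) :
    ∑ v : Fin N → Bool, ((if v p then (1:ℂ) else -1) * (if v i then 1 else -1))
      = if p = i then (2:ℂ)^N else 0 := by
  classical
  by_cases h : p = i
  · subst h
    rw [if_pos rfl]
    have hterm : ∀ v : Fin N → Bool,
        (if v p then (1:ℂ) else -1) * (if v p then 1 else -1) = 1 := by
      intro v; by_cases hv : v p <;> simp [hv]
    rw [Finset.sum_congr rfl fun v _ => hterm v, Finset.sum_const, Finset.card_univ]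
    rw [Fintype.card_fun, Fintype.card_bool, Fintype.card_fin, nsmul_eq_mul, mul_one]
    push_cast
    ring
  · rw [if_neg h]
    refine Finset.sum_involution (fun v _ => Function.update v p (!(v p))) ?_ ?_ ?_ ?_
    · intro v _
      show ((if v p = true then (1:ℂ) else -1) * (if v i = true then 1 else -1)) +
        ((if Function.update v p (!(v p)) p = true then (1:ℂ) else -1) *
          (if Function.update v p (!(v p)) i = true then 1 else -1)) = 0
      rw [Function.update_self, Function.update_of_ne (fun hh : i = p => h hh.symm)]
      by_cases hv : v p <;> by_cases hvi : v i <;> simp [hv, hvi]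
    · intro v _ _ hh
      have h2 : Function.update v p (!(v p)) p = v p := congrFun hh p
      rw [Function.update_self] at h2
      simp at h2
    · intro v _; exact Finset.mem_univ _
    · intro v _
      show Function.update (Function.update v p (!(v p))) p
          (!(Function.update v p (!(v p)) p)) = v
      rw [Function.update_self, Bool.not_not, Function.update_idem, Function.update_eq_self]

open Fin.NatCast in
lemma sgnGroup_span (l : ℕ) :
    Submodule.span ℂ
      ((fun g : GL (Fin l) ℂ => (g : Matrix (Fin l) (Fin l) ℂ)) '' (sgnGroup l)) = ⊤ := by
  classical
  rw [eq_top_iff]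
  rintro A -
  rw [Matrix.matrix_eq_sum_single A]
  refine Submodule.sum_mem _ fun p _ => Submodule.sum_mem _ fun q _ => ?_
  have hsmul : Matrix.single p q (A p q) = (A p q) • Matrix.single p q 1 := by
    rw [Matrix.smul_single, smul_eq_mul, mul_one]
  rw [hsmul]
  refine Submodule.smul_mem _ _ ?_
  clear hsmul A
  rcases l with _ | m
  · exact p.elim0
  set σ : Equiv.Perm (Fin (m+1)) := (finRotate (m+1))^(((p - q : Fin (m+1))) : ℕ) with hσdef
  have hσq : σ q = p := by
    rw [hσdef, finRotate_pow_apply, Fin.cast_val_eq_self]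
    exact (add_comm q (p - q)).trans (sub_add_cancel p q)
  have hmem : ∀ v : Fin (m+1) → Bool,
      Matrix.diagonal (fun j => if v j then (1:ℂ) else -1) * permMat σ
        ∈ ((fun g : GL (Fin (m+1)) ℂ => (g : Matrix (Fin (m+1)) (Fin (m+1)) ℂ))
            '' (sgnGroup (m+1))) := by
    intro v
    refine ⟨sgnUnit (fun j => if v j then (1:ℂ) else -1) σ
      (fun j => by by_cases hv : v j <;> simp [hv]), ?_, rfl⟩
    exact ⟨((p - q : Fin (m+1)) : ℕ), fun j => if v j then (1:ℂ) else -1,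
      fun j => by by_cases hv : v j <;> simp [hv], rfl⟩
  have hiden : (∑ v : Fin (m+1) → Bool, (if v p then (1:ℂ) else -1) •
        (Matrix.diagonal (fun j => if v j then (1:ℂ) else -1) * permMat σ))
      = ((2:ℂ)^(m+1)) • Matrix.single p q 1 := by
    ext i j
    rw [Matrix.sum_apply]
    have hterm : ∀ v : Fin (m+1) → Bool,
        ((if v p then (1:ℂ) else -1) •
          (Matrix.diagonal (fun j' => if v j' then (1:ℂ) else -1) * permMat σ)) i j
        = if i = σ j then (if v p then (1:ℂ) else -1) * (if v i then 1 else -1) else 0 := by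
      intro v
      rw [Matrix.smul_apply, Matrix.diagonal_mul, permMat_apply, smul_eq_mul]
      by_cases hij : i = σ j
      · rw [if_pos hij, if_pos hij, mul_one]
      · rw [if_neg hij, if_neg hij, mul_zero, mul_zero]
    rw [Finset.sum_congr rfl fun v _ => hterm v]
    by_cases hij : i = σ j
    · rw [Finset.sum_congr rfl fun v (_ : v ∈ Finset.univ) => if_pos hij, charSum]
      by_cases hpi : p = i
      · have hqj : q = j := by
          apply σ.injective
          rw [hσq, hpi, hij]
        rw [if_pos hpi, Matrix.smul_apply, ← hpi, ← hqj, Matrix.single_apply_same,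
          smul_eq_mul, mul_one]
      · rw [if_neg hpi, Matrix.smul_apply, Matrix.single_apply_of_row_ne hpi, smul_zero]
    · rw [Finset.sum_congr rfl fun v (_ : v ∈ Finset.univ) => if_neg hij, Finset.sum_const_zero]
      rw [Matrix.smul_apply, Matrix.single_apply_of_ne, smul_zero]
      rintro ⟨hpi, hqj⟩
      exact hij (by rw [← hpi, ← hqj, hσq])
  have hfin : Matrix.single p q (1:ℂ)
      = ((2:ℂ)^(m+1))⁻¹ • (∑ v : Fin (m+1) → Bool, (if v p then (1:ℂ) else -1) •
        (Matrix.diagonal (fun j => if v j then (1:ℂ) else -1) * permMat σ)) := by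
    rw [hiden, smul_smul, inv_mul_cancel₀ (pow_ne_zero _ two_ne_zero), one_smul]
  rw [hfin]
  exact Submodule.smul_mem _ _ (Submodule.sum_mem _ fun v _ =>
    Submodule.smul_mem _ _ (Submodule.subset_span (hmem v)))

end PropAAux


/-- **Theorem 4.5.** If a Banach space `X` has a subsymmetric and shrinking Schauder
basis, then `X` has property (𝔸). -/
theorem hasPropertyA_of_subsymmetric_shrinking_basis
    (X : Type*) [NormedAddCommGroup X] [NormedSpace ℂ X] [CompleteSpace X]
    (b : CSchauderBasis X) (hsub : b.Subsymmetric) (hshr : b.Shrinking) :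
    HasPropertyA X := by
  classical
  obtain ⟨CT, hCT1, hCT⟩ := transUniform b hsub
  obtain ⟨K, hK1, hK⟩ := exists_signBound b hsub.1
  have hCT0 : (0:ℝ) ≤ CT := by linarith
  have hK0 : (0:ℝ) ≤ K := by linarith
  have hE : ∀ l : ℕ,
      (∑ i : Fin l, ∑ j : Fin l, (1 : Matrix (Fin l) (Fin l) ℂ) i j •
        (b.coord (j:ℕ)).smulRight (b.e (i:ℕ)))
        = ∑ n ∈ Finset.range l, (b.coord n).smulRight (b.e n) := by
    intro l
    have h1 : ∀ i : Fin l, (∑ j : Fin l, (1 : Matrix (Fin l) (Fin l) ℂ) i j •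
        (b.coord (j:ℕ)).smulRight (b.e (i:ℕ))) = (b.coord (i:ℕ)).smulRight (b.e (i:ℕ)) := by
      intro i
      have h2 : ∀ j : Fin l, (1 : Matrix (Fin l) (Fin l) ℂ) i j •
          (b.coord (j:ℕ)).smulRight (b.e (i:ℕ))
          = if i = j then (b.coord (j:ℕ)).smulRight (b.e (i:ℕ)) else 0 := by
        intro j
        rw [Matrix.one_apply]
        by_cases h : i = j
        · rw [if_pos h, if_pos h, one_smul]
        · rw [if_neg h, if_neg h, zero_smul]
      rw [Finset.sum_congr rfl fun j _ => h2 j, Finset.sum_ite_eq Finset.univ i,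
        if_pos (Finset.mem_univ i)]
    rw [Finset.sum_congr rfl fun i _ => h1 i]
    exact Fin.sum_univ_eq_sum_range (fun n => (b.coord n).smulRight (b.e n)) l
  refine ⟨ℕ, ⟨0⟩, inferInstance, inferInstance, fun l => l, fun l i => b.e (i : ℕ),
    fun l j => b.coord (j : ℕ), ?_, ?_, ?_, ?_⟩
  · intro l i j
    rw [b.biorthogonal]
    simp [Fin.val_eq_val]
  · -- (i) strong convergence
    intro v
    have hfun : ∀ l : ℕ, (∑ n ∈ Finset.range l, b.coord n v • b.e n)
        = (∑ i : Fin l, ∑ j : Fin l, (1 : Matrix (Fin l) (Fin l) ℂ) i j •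
          (b.coord (j:ℕ)).smulRight (b.e (i:ℕ))) v := by
      intro l
      rw [hE l, ContinuousLinearMap.sum_apply]
      exact Finset.sum_congr rfl fun n _ => by rw [ContinuousLinearMap.smulRight_apply]
    exact (b.expansion v).congr hfun
  · -- (ii) adjoints converge
    intro f
    have hfun : ∀ l : ℕ, f.comp (∑ n ∈ Finset.range l, (b.coord n).smulRight (b.e n))
        = f.comp (∑ i : Fin l, ∑ j : Fin l, (1 : Matrix (Fin l) (Fin l) ℂ) i j •
          (b.coord (j:ℕ)).smulRight (b.e (i:ℕ))) :=
      fun l => congrArg f.comp (hE l).symm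
    exact (hshr f).congr hfun
  · -- (iii) the groups
    refine ⟨fun l => sgnGroup l, 2 * CT * K, fun l => sgnGroup_finite l,
      fun l => sgnGroup_span l, ?_⟩
    intro l g hg
    obtain ⟨k, d, hd, hgeq⟩ := hg
    set σ : Equiv.Perm (Fin l) := (finRotate l)^k with hσdef
    show ‖∑ i : Fin l, ∑ j : Fin l, (g : Matrix (Fin l) (Fin l) ℂ) i j •
      (b.coord (j:ℕ)).smulRight (b.e (i:ℕ))‖ ≤ 2 * CT * K
    have hEg : (∑ i : Fin l, ∑ j : Fin l, (g : Matrix (Fin l) (Fin l) ℂ) i j •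
        (b.coord (j:ℕ)).smulRight (b.e (i:ℕ)))
        = ∑ j : Fin l, d (σ j) • (b.coord (j:ℕ)).smulRight (b.e ((σ j : Fin l) : ℕ)) := by
      rw [Finset.sum_comm]
      refine Finset.sum_congr rfl fun j _ => ?_
      have hterm : ∀ i : Fin l, (g : Matrix (Fin l) (Fin l) ℂ) i j •
          (b.coord (j:ℕ)).smulRight (b.e (i:ℕ))
          = if i = σ j then d i • (b.coord (j:ℕ)).smulRight (b.e (i:ℕ)) else 0 := by
        intro i
        rw [hgeq, Matrix.diagonal_mul, permMat_apply]
        by_cases h : i = σ j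
        · rw [if_pos h, if_pos h, mul_one]
        · rw [if_neg h, if_neg h, mul_zero, zero_smul]
      rw [Finset.sum_congr rfl fun i _ => hterm i, Finset.sum_ite_eq' Finset.univ (σ j),
        if_pos (Finset.mem_univ _)]
    rw [hEg]
    have hM0 : (0:ℝ) ≤ 2 * CT * K := by nlinarith
    apply ContinuousLinearMap.opNorm_le_bound _ hM0
    intro x
    rw [ContinuousLinearMap.sum_apply]
    have happly : ∀ j : Fin l, (d (σ j) • (b.coord (j:ℕ)).smulRight (b.e ((σ j : Fin l):ℕ))) x
        = d (σ j) • (b.coord (j:ℕ) x • b.e ((σ j : Fin l):ℕ)) := by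
      intro j; rw [ContinuousLinearMap.smul_apply, ContinuousLinearMap.smulRight_apply]
    rw [Finset.sum_congr rfl fun j _ => happly j]
    rcases Nat.eq_zero_or_pos l with hl | hl
    · subst hl
      rw [Finset.univ_eq_empty, Finset.sum_empty, norm_zero]
      exact mul_nonneg hM0 (norm_nonneg x)
    set k₀ := k % l with hk₀
    have hk₀lt : k₀ < l := Nat.mod_lt _ hl
    set L₁ := l - k₀ with hL₁
    set ε : ℕ → ℂ := fun jn => if h : jn < l then d (σ ⟨jn, h⟩) else 1 with hε
    set F : ℕ → X := fun jn => if h : jn < l then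
        ε jn • (b.coord jn x • b.e ((σ ⟨jn, h⟩ : Fin l) : ℕ)) else 0 with hF
    have hεsgn : ∀ jn : ℕ, ε jn = 1 ∨ ε jn = -1 := by
      intro jn
      by_cases h : jn < l
      · simp only [hε, dif_pos h]; exact hd _
      · simp only [hε, dif_neg h]
        trivial
    have hσval : ∀ (jn : ℕ) (h : jn < l), ((σ ⟨jn, h⟩ : Fin l) : ℕ) = (jn + k) % l := by
      intro jn h
      rw [hσdef]
      exact finRotate_pow_val' l hl k ⟨jn, h⟩
    have hFsum : ∑ j : Fin l, d (σ j) • (b.coord (j:ℕ) x • b.e ((σ j : Fin l):ℕ))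
        = ∑ jn ∈ Finset.range l, F jn := by
      rw [← Fin.sum_univ_eq_sum_range F l]
      refine Finset.sum_congr rfl fun j _ => ?_
      have hj : (j : ℕ) < l := j.isLt
      simp only [hF, hε, dif_pos hj, Fin.eta]
    have hsplit : ∑ jn ∈ Finset.range l, F jn
        = (∑ jn ∈ Finset.range L₁, F jn) + ∑ jn ∈ Finset.Ico L₁ l, F jn := by
      rw [Finset.range_eq_Ico, Finset.range_eq_Ico]
      exact (Finset.sum_Ico_consecutive F (Nat.zero_le L₁) (show L₁ ≤ l by omega)).symm
    have hA : ∑ jn ∈ Finset.range L₁, F jn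
        = b.pat (fun jn => ε jn * b.coord jn x) L₁ k₀ := by
      refine Finset.sum_congr rfl fun jn hjn => ?_
      have h1 : jn < L₁ := Finset.mem_range.mp hjn
      have h2 : jn < l := by omega
      simp only [hF, dif_pos h2]
      rw [hσval jn h2]
      have h3 : (jn + k) % l = k₀ + jn := by
        conv_lhs => rw [← Nat.add_mod_mod]
        rw [Nat.mod_eq_of_lt (show jn + k % l < l by omega)]
        omega
      rw [h3, smul_smul]
    have hA0 : b.pat (fun jn => ε jn * b.coord jn x) L₁ 0
        = ∑ jn ∈ Finset.range L₁, ε jn • (b.coord jn x • b.e jn) := by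
      refine Finset.sum_congr rfl fun jn hjn => ?_
      rw [zero_add, ← smul_smul]
    have hAb : ‖∑ jn ∈ Finset.range L₁, F jn‖ ≤ CT * (K * ‖x‖) := by
      rw [hA]
      refine (hCT _ L₁ 0 k₀).trans ?_
      refine mul_le_mul_of_nonneg_left ?_ hCT0
      rw [hA0]
      exact hK (Finset.range L₁) ε (fun j _ => hεsgn j) x
    have hB : ∑ jn ∈ Finset.Ico L₁ l, F jn
        = b.pat (fun tt => ε (L₁ + tt) * b.coord (L₁ + tt) x) k₀ 0 := by
      rw [Finset.sum_Ico_eq_sum_range, show l - L₁ = k₀ from by omega]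
      refine Finset.sum_congr rfl fun tt htt => ?_
      have h1 : tt < k₀ := Finset.mem_range.mp htt
      have h2 : L₁ + tt < l := by omega
      simp only [hF, dif_pos h2]
      rw [hσval _ h2]
      have h3 : (L₁ + tt + k) % l = 0 + tt := by
        conv_lhs => rw [← Nat.add_mod_mod]
        rw [show L₁ + tt + k % l = l + tt from by omega, Nat.add_mod_left,
          Nat.mod_eq_of_lt (show tt < l by omega)]
        omega
      rw [h3, smul_smul]
    have hB1 : b.pat (fun tt => ε (L₁ + tt) * b.coord (L₁ + tt) x) k₀ L₁
        = ∑ jn ∈ Finset.Ico L₁ l, ε jn • (b.coord jn x • b.e jn) := by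
      rw [Finset.sum_Ico_eq_sum_range, show l - L₁ = k₀ from by omega]
      refine Finset.sum_congr rfl fun tt htt => ?_
      rw [← smul_smul]
    have hBb : ‖∑ jn ∈ Finset.Ico L₁ l, F jn‖ ≤ CT * (K * ‖x‖) := by
      rw [hB]
      refine (hCT _ k₀ L₁ 0).trans ?_
      refine mul_le_mul_of_nonneg_left ?_ hCT0
      rw [hB1]
      exact hK (Finset.Ico L₁ l) ε (fun j _ => hεsgn j) x
    rw [hFsum]
    calc ‖∑ jn ∈ Finset.range l, F jn‖
        ≤ ‖∑ jn ∈ Finset.range L₁, F jn‖ + ‖∑ jn ∈ Finset.Ico L₁ l, F jn‖ := by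
          rw [hsplit]; exact norm_add_le _ _
      _ ≤ CT * (K * ‖x‖) + CT * (K * ‖x‖) := add_le_add hAb hBb
      _ = 2 * CT * K * ‖x‖ := by ring


end
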